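/- Strong typings of pattern substitutions are preserved by context splitting: if Γ ⊢ s : Γ' is a strong typing of a pattern substitution and Γ' = Γ'₁ ⋈ Γ'₂ is a context split, then s admits typings Γ₁ ⊢ s : Γ'₁ and Γ₂ ⊢ s : Γ'₂ with Γ = Γ₁ ⋈ Γ₂, and both of these typings are strong. -/

import Mathlib

/-!
A typing `Γ ⊢ s : Γ'` splits along `Γ' = Γ'₁ ⋈ Γ'₂` entry by entry: an A or L entry sent to one
side takes its variable along, and the other side types it as used by the relaxed variable rule.
Strength is tracked through a criterion. An affine codomain assumption comes from an entry `j^A`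
whose variable is still available in the domain, a used-affine one from an entry typed by the
relaxed rule; so a typing of a pattern substitution is strong exactly when every affine entry `j^A`
with a used-affine codomain assumption finds `j` used-affine in `Γ`. Were `j` still affine,
distinctness of the pattern's indices would let the entry consume `j` alone and type the assumption
as affine, a proper affine weakening of `Γ'`.
The criterion passes to both halves: a used-affine assumption of `Γ'₁` is either used-affine in
`Γ'`, so `j` is used-affine in `Γ` and in both halves, or affine in `Γ'₂`, so the entry consumes
`j` on the second side and leaves it used-affine on the first.
-/

namespace LinUnif

/-- Linearity flags on variables/terms. -/
inductive Flag | I | A | L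
deriving DecidableEq

/-- Context linearity flags: intuitionistic, affine, used affine, linear, used linear. -/
inductive CFlag | i | a | ua | l | ul
deriving DecidableEq

/-- Types of the linear/affine λ-calculus. -/
inductive Ty
  | base (n : ℕ)
  | withT (A B : Ty)
  | lolli (A B : Ty)
  | affarr (A B : Ty)
  | arr (A B : Ty)
deriving DecidableEq

/-- Contexts: lists of types tagged with context linearity flags (head = de Bruijn index 1). -/
abbrev Ctx := List (Ty × CFlag)

def flagC : Flag → CFlag | .I => .i | .A => .a | .L => .l
def cToF : CFlag → Flag | .i => .I | .a => .A | .ua => .A | .l => .L | .ul => .L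

/-- No linear (L) assumptions occur. -/
def NoLin (Γ : Ctx) : Prop := ∀ e ∈ Γ, e.2 ≠ CFlag.l

/-- The intuitionistic part of a context: L ↦ UL, A ↦ UA. -/
def bar (Γ : Ctx) : Ctx :=
  Γ.map fun e => (e.1, match e.2 with | .l => CFlag.ul | .a => CFlag.ua | c => c)

/-- Context splitting Γ = Γ₁ ⋈ Γ₂. -/
inductive Split : Ctx → Ctx → Ctx → Prop
  | nil : Split [] [] []
  | int {Γ Γ₁ Γ₂ A} : Split Γ Γ₁ Γ₂ → Split ((A,.i)::Γ) ((A,.i)::Γ₁) ((A,.i)::Γ₂)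
  | ulin {Γ Γ₁ Γ₂ A} : Split Γ Γ₁ Γ₂ → Split ((A,.ul)::Γ) ((A,.ul)::Γ₁) ((A,.ul)::Γ₂)
  | uaff {Γ Γ₁ Γ₂ A} : Split Γ Γ₁ Γ₂ → Split ((A,.ua)::Γ) ((A,.ua)::Γ₁) ((A,.ua)::Γ₂)
  | linl {Γ Γ₁ Γ₂ A} : Split Γ Γ₁ Γ₂ → Split ((A,.l)::Γ) ((A,.l)::Γ₁) ((A,.ul)::Γ₂)
  | linr {Γ Γ₁ Γ₂ A} : Split Γ Γ₁ Γ₂ → Split ((A,.l)::Γ) ((A,.ul)::Γ₁) ((A,.l)::Γ₂)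
  | affl {Γ Γ₁ Γ₂ A} : Split Γ Γ₁ Γ₂ → Split ((A,.a)::Γ) ((A,.a)::Γ₁) ((A,.ua)::Γ₂)
  | affr {Γ Γ₁ Γ₂ A} : Split Γ Γ₁ Γ₂ → Split ((A,.a)::Γ) ((A,.ua)::Γ₁) ((A,.a)::Γ₂)

/-- Affine weakening Γ ≻_aff Γ'. -/
def AffWeak (Γ Γ' : Ctx) : Prop := ∃ Γ'', Split Γ Γ'' Γ' ∧ NoLin Γ''

/-- Typing of variables (1-based de Bruijn indices): Γ ⊢ n^f ⇒ A. -/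
inductive VarTy : Ctx → ℕ → Flag → Ty → Prop
  | here {Γ A f} : NoLin Γ → VarTy ((A, flagC f)::Γ) 1 f A
  | there {Γ B l n f A} : VarTy Γ n f A → l ≠ CFlag.l → VarTy ((B,l)::Γ) (n+1) f A

/-- Relaxed typing of variables Γ ⊢ᵢ n^f ⇒ A : all variables available,
    disregarding linearity/affineness (usedness). -/
inductive VarTyR : Ctx → ℕ → Flag → Ty → Prop
  | here {Γ A l f} : cToF l = f → VarTyR ((A,l)::Γ) 1 f A
  | there {Γ B l n f A} : VarTyR Γ n f A → VarTyR ((B,l)::Γ) (n+1) f A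

/-- Substitution entries: a de Bruijn index together with its variable flag f'
    and the extension flag f (the entry `n^{f'f}`). A full substitution is a
    list of entries followed by a shift `↑ⁿ`. -/
abbrev SubE := List (ℕ × Flag × Flag)

def shiftE (es : SubE) : SubE := es.map fun e => (e.1+1, e.2)

/-- Typing of substitutions (whose entries are variables): Γ ⊢ es.↑ⁿ : Γ'. -/
inductive SubTy : Ctx → SubE → ℕ → Ctx → Prop
  | nil : SubTy [] [] 0 []
  | shift {Γ B l n Γ'} : SubTy Γ [] n Γ' → l ≠ CFlag.l → SubTy ((B,l)::Γ) [] (n+1) Γ'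
  | consI {Γ m f' A es n Γ'} : VarTy (bar Γ) m f' A → SubTy Γ es n Γ' →
      SubTy Γ ((m,f',Flag.I)::es) n ((A,CFlag.i)::Γ')
  | consL {Γ Γ₁ Γ₂ m f' A es n Γ'} : Split Γ Γ₁ Γ₂ → VarTy Γ₁ m f' A → SubTy Γ₂ es n Γ' →
      SubTy Γ ((m,f',Flag.L)::es) n ((A,CFlag.l)::Γ')
  | consA {Γ Γ₁ Γ₂ m f' A es n Γ'} : Split Γ Γ₁ Γ₂ → NoLin Γ₁ → VarTy Γ₁ m f' A →
      SubTy Γ₂ es n Γ' → SubTy Γ ((m,f',Flag.A)::es) n ((A,CFlag.a)::Γ')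
  | consUL {Γ m f' A es n Γ'} : VarTyR Γ m f' A → SubTy Γ es n Γ' →
      SubTy Γ ((m,f',Flag.L)::es) n ((A,CFlag.ul)::Γ')
  | consUA {Γ m f' A es n Γ'} : VarTyR Γ m f' A → f' ≠ Flag.L → SubTy Γ es n Γ' →
      SubTy Γ ((m,f',Flag.A)::es) n ((A,CFlag.ua)::Γ')

/-- Pattern substitution: distinct de Bruijn indices, no linear-changing extension. -/
def PatternSub (es : SubE) : Prop :=
  es.Pairwise (fun a b => a.1 ≠ b.1) ∧ ∀ e ∈ es, e.2.1 = e.2.2 ∧ 1 ≤ e.1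

/-- Terms (canonical forms), with logic variables `lvar X es sh` under a
    substitution consisting of variable entries `es` and a trailing shift `sh`. -/
inductive Tm
  | var (n : ℕ) (f : Flag)
  | lvar (X : ℕ) (es : SubE) (sh : ℕ)
  | pair (M N : Tm)
  | fst (M : Tm)
  | snd (M : Tm)
  | lamL (M : Tm)
  | lamA (M : Tm)
  | lamI (M : Tm)
  | appL (M N : Tm)
  | appA (M N : Tm)
  | appI (M N : Tm)
deriving DecidableEq

/-- Bidirectional typing of canonical terms, with assignments ΓX, AX of contexts
    and types to logic variables. -/
inductive HasTy (ΓX : ℕ → Ctx) (AX : ℕ → Ty) : Ctx → Tm → Ty → Prop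
  | var {Γ n f A} : VarTy Γ n f A → HasTy ΓX AX Γ (.var n f) A
  | lvar {Γ es sh X} : SubTy Γ es sh (ΓX X) → HasTy ΓX AX Γ (.lvar X es sh) (AX X)
  | pair {Γ M N A B} : HasTy ΓX AX Γ M A → HasTy ΓX AX Γ N B →
      HasTy ΓX AX Γ (.pair M N) (.withT A B)
  | fst {Γ M A B} : HasTy ΓX AX Γ M (.withT A B) → HasTy ΓX AX Γ (.fst M) A
  | snd {Γ M A B} : HasTy ΓX AX Γ M (.withT A B) → HasTy ΓX AX Γ (.snd M) B
  | lamL {Γ M A B} : HasTy ΓX AX ((A,CFlag.l)::Γ) M B → HasTy ΓX AX Γ (.lamL M) (.lolli A B)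
  | lamA {Γ M A B} : HasTy ΓX AX ((A,CFlag.a)::Γ) M B → HasTy ΓX AX Γ (.lamA M) (.affarr A B)
  | lamI {Γ M A B} : HasTy ΓX AX ((A,CFlag.i)::Γ) M B → HasTy ΓX AX Γ (.lamI M) (.arr A B)
  | appL {Γ Γ₁ Γ₂ M N A B} : Split Γ Γ₁ Γ₂ → HasTy ΓX AX Γ₁ M (.lolli A B) →
      HasTy ΓX AX Γ₂ N A → HasTy ΓX AX Γ (.appL M N) B
  | appA {Γ Γ₁ Γ₂ M N A B} : Split Γ Γ₁ Γ₂ → NoLin Γ₂ → HasTy ΓX AX Γ₁ M (.affarr A B) →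
      HasTy ΓX AX Γ₂ N A → HasTy ΓX AX Γ (.appA M N) B
  | appI {Γ M N A B} : HasTy ΓX AX Γ M (.arr A B) → HasTy ΓX AX (bar Γ) N A →
      HasTy ΓX AX Γ (.appI M N) B

/-- All logic-variable substitutions occurring in a term are pattern substitutions. -/
def PatternTm : Tm → Prop
  | .var _ _ => True
  | .lvar _ es _ => PatternSub es
  | .pair M N => PatternTm M ∧ PatternTm N
  | .fst M => PatternTm M
  | .snd M => PatternTm M
  | .lamL M => PatternTm M
  | .lamA M => PatternTm M
  | .lamI M => PatternTm M
  | .appL M N => PatternTm M ∧ PatternTm N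
  | .appA M N => PatternTm M ∧ PatternTm N
  | .appI M N => PatternTm M ∧ PatternTm N

/-- Occurrence n ∈ M of a variable in a term (flexible occurrences included). -/
inductive Occurs : ℕ → Tm → Prop
  | var {n f} : Occurs n (.var n f)
  | lvar {n X es sh e} : e ∈ es → e.1 = n → Occurs n (.lvar X es sh)
  | pairl {n M N} : Occurs n M → Occurs n (.pair M N)
  | pairr {n M N} : Occurs n N → Occurs n (.pair M N)
  | fst {n M} : Occurs n M → Occurs n (.fst M)
  | snd {n M} : Occurs n M → Occurs n (.snd M)
  | lamL {n M} : Occurs (n+1) M → Occurs n (.lamL M)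
  | lamA {n M} : Occurs (n+1) M → Occurs n (.lamA M)
  | lamI {n M} : Occurs (n+1) M → Occurs n (.lamI M)
  | appLl {n M N} : Occurs n M → Occurs n (.appL M N)
  | appLr {n M N} : Occurs n N → Occurs n (.appL M N)
  | appAl {n M N} : Occurs n M → Occurs n (.appA M N)
  | appAr {n M N} : Occurs n N → Occurs n (.appA M N)
  | appIl {n M N} : Occurs n M → Occurs n (.appI M N)
  | appIr {n M N} : Occurs n N → Occurs n (.appI M N)

/-- Rigid occurrence n ∈_rig M: occurrence not inside a logic variable. -/
inductive RigidOccurs : ℕ → Tm → Prop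
  | var {n f} : RigidOccurs n (.var n f)
  | pairl {n M N} : RigidOccurs n M → RigidOccurs n (.pair M N)
  | pairr {n M N} : RigidOccurs n N → RigidOccurs n (.pair M N)
  | fst {n M} : RigidOccurs n M → RigidOccurs n (.fst M)
  | snd {n M} : RigidOccurs n M → RigidOccurs n (.snd M)
  | lamL {n M} : RigidOccurs (n+1) M → RigidOccurs n (.lamL M)
  | lamA {n M} : RigidOccurs (n+1) M → RigidOccurs n (.lamA M)
  | lamI {n M} : RigidOccurs (n+1) M → RigidOccurs n (.lamI M)
  | appLl {n M N} : RigidOccurs n M → RigidOccurs n (.appL M N)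
  | appLr {n M N} : RigidOccurs n N → RigidOccurs n (.appL M N)
  | appAl {n M N} : RigidOccurs n M → RigidOccurs n (.appA M N)
  | appAr {n M N} : RigidOccurs n N → RigidOccurs n (.appA M N)
  | appIl {n M N} : RigidOccurs n M → RigidOccurs n (.appI M N)
  | appIr {n M N} : RigidOccurs n N → RigidOccurs n (.appI M N)

/-- Occurrence of a logic variable X in a term. -/
inductive HasLvar : ℕ → Tm → Prop
  | lvar {X es sh} : HasLvar X (.lvar X es sh)
  | pairl {X M N} : HasLvar X M → HasLvar X (.pair M N)
  | pairr {X M N} : HasLvar X N → HasLvar X (.pair M N)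
  | fst {X M} : HasLvar X M → HasLvar X (.fst M)
  | snd {X M} : HasLvar X M → HasLvar X (.snd M)
  | lamL {X M} : HasLvar X M → HasLvar X (.lamL M)
  | lamA {X M} : HasLvar X M → HasLvar X (.lamA M)
  | lamI {X M} : HasLvar X M → HasLvar X (.lamI M)
  | appLl {X M N} : HasLvar X M → HasLvar X (.appL M N)
  | appLr {X M N} : HasLvar X N → HasLvar X (.appL M N)
  | appAl {X M N} : HasLvar X M → HasLvar X (.appA M N)
  | appAr {X M N} : HasLvar X N → HasLvar X (.appA M N)
  | appIl {X M N} : HasLvar X M → HasLvar X (.appI M N)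
  | appIr {X M N} : HasLvar X N → HasLvar X (.appI M N)

/-- Look up a (1-based) variable index in a substitution es.↑^sh,
    returning the new index and variable flag. -/
def lookupE (es : SubE) (sh : ℕ) (n : ℕ) (f : Flag) : ℕ × Flag :=
  match es[n-1]? with
  | some e => (e.1, e.2.1)
  | none => (n - es.length + sh, f)

/-- Extend a substitution under a binder: 1^{ff}.(s ∘ ↑). -/
def extSub (es : SubE) (f : Flag) : SubE := (1, f, f) :: shiftE es

/-- Apply a substitution (of the variable-entry form) to a term. -/
def applySub (es : SubE) (sh : ℕ) : Tm → Tm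
  | .var n f => .var (lookupE es sh n f).1 (lookupE es sh n f).2
  | .lvar X ts _ =>
      .lvar X (ts.map fun e => ((lookupE es sh e.1 e.2.1).1, (lookupE es sh e.1 e.2.1).2, e.2.2)) sh
  | .pair M N => .pair (applySub es sh M) (applySub es sh N)
  | .fst M => .fst (applySub es sh M)
  | .snd M => .snd (applySub es sh M)
  | .lamL M => .lamL (applySub (extSub es .L) (sh+1) M)
  | .lamA M => .lamA (applySub (extSub es .A) (sh+1) M)
  | .lamI M => .lamI (applySub (extSub es .I) (sh+1) M)
  | .appL M N => .appL (applySub es sh M) (applySub es sh N)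
  | .appA M N => .appA (applySub es sh M) (applySub es sh N)
  | .appI M N => .appI (applySub es sh M) (applySub es sh N)

/-- Instantiation [X ← N]M of a logic variable. -/
def inst (X : ℕ) (N : Tm) : Tm → Tm
  | .var n f => .var n f
  | .lvar Y es sh => if Y = X then applySub es sh N else .lvar Y es sh
  | .pair M M' => .pair (inst X N M) (inst X N M')
  | .fst M => .fst (inst X N M)
  | .snd M => .snd (inst X N M)
  | .lamL M => .lamL (inst X N M)
  | .lamA M => .lamA (inst X N M)
  | .lamI M => .lamI (inst X N M)
  | .appL M M' => .appL (inst X N M) (inst X N M')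
  | .appA M M' => .appA (inst X N M) (inst X N M')
  | .appI M M' => .appI (inst X N M) (inst X N M')


/-- A typing Γ ⊢ s : Γ' is strong if there is no Γ'' ≠ Γ' with Γ'' ≻_aff Γ'
    and Γ ⊢ s : Γ''. -/
def StrongTy (Γ : Ctx) (es : SubE) (n : ℕ) (Γ' : Ctx) : Prop :=
  SubTy Γ es n Γ' ∧ ∀ Γ'', AffWeak Γ'' Γ' → SubTy Γ es n Γ'' → Γ'' = Γ'

theorem _root_.List.set_eq_self_of_getElem? {α : Type*} {l : List α} {p : ℕ} {x : α}
    (h : l[p]? = some x) : l.set p x = l := by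
  ext k
  rw [List.getElem?_set]
  split_ifs with hk <;> simp_all

inductive CFlag.Split : CFlag → CFlag → CFlag → Prop
  | int : CFlag.Split .i .i .i
  | ulin : CFlag.Split .ul .ul .ul
  | uaff : CFlag.Split .ua .ua .ua
  | linl : CFlag.Split .l .l .ul
  | linr : CFlag.Split .l .ul .l
  | affl : CFlag.Split .a .a .ua
  | affr : CFlag.Split .a .ua .a

namespace Split

variable {Γ Γ₁ Γ₂ : Ctx}

theorem cons {A : Ty} {c c₁ c₂ : CFlag} (hc : CFlag.Split c c₁ c₂) (h : Split Γ Γ₁ Γ₂) :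
    Split ((A, c) :: Γ) ((A, c₁) :: Γ₁) ((A, c₂) :: Γ₂) := by
  cases hc
  exacts [.int h, .ulin h, .uaff h, .linl h, .linr h, .affl h, .affr h]

theorem symm (h : Split Γ Γ₁ Γ₂) : Split Γ Γ₂ Γ₁ := by
  induction h
  case nil => exact .nil
  all_goals rename_i ih; exact .cons (by constructor) ih

theorem getElem? (h : Split Γ Γ₁ Γ₂) (k : ℕ) :
    (Γ[k]? = none ∧ Γ₁[k]? = none ∧ Γ₂[k]? = none) ∨
    ∃ A c c₁ c₂, Γ[k]? = some (A, c) ∧ Γ₁[k]? = some (A, c₁) ∧ Γ₂[k]? = some (A, c₂) ∧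
      CFlag.Split c c₁ c₂ := by
  induction h generalizing k
  case nil => simp
  all_goals
    rename_i ih
    cases k with
    | zero => exact .inr ⟨_, _, _, _, rfl, rfl, rfl, by constructor⟩
    | succ k => simpa using ih k

theorem getElem?_eq_some (h : Split Γ Γ₁ Γ₂) {k : ℕ} {A : Ty} {c : CFlag}
    (hk : Γ[k]? = some (A, c)) :
    ∃ c₁ c₂, Γ₁[k]? = some (A, c₁) ∧ Γ₂[k]? = some (A, c₂) ∧ CFlag.Split c c₁ c₂ := by
  rcases h.getElem? k with ⟨h₀, -, -⟩ | ⟨A', c', c₁, c₂, h₀, h₁, h₂, hc⟩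
  · simp_all
  · rw [hk, Option.some_inj, Prod.mk.injEq] at h₀
    obtain ⟨rfl, rfl⟩ := h₀
    exact ⟨c₁, c₂, h₁, h₂, hc⟩

theorem getElem?_left_eq_some (h : Split Γ Γ₁ Γ₂) {k : ℕ} {A : Ty} {c₁ : CFlag}
    (hk : Γ₁[k]? = some (A, c₁)) :
    ∃ c c₂, Γ[k]? = some (A, c) ∧ Γ₂[k]? = some (A, c₂) ∧ CFlag.Split c c₁ c₂ := by
  rcases h.getElem? k with ⟨-, h₁, -⟩ | ⟨A', c, c₁', c₂, h₀, h₁, h₂, hc⟩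
  · simp_all
  · rw [hk, Option.some_inj, Prod.mk.injEq] at h₁
    obtain ⟨rfl, rfl⟩ := h₁
    exact ⟨c, c₂, h₀, h₂, hc⟩

theorem getElem?_of_left (h : Split Γ Γ₁ Γ₂) {k : ℕ} {A : Ty} {f : Flag}
    (hk : Γ₁[k]? = some (A, flagC f)) : Γ[k]? = some (A, flagC f) := by
  obtain ⟨c, c₂, h₀, -, hc⟩ := h.getElem?_left_eq_some hk
  cases f <;> cases hc <;> exact h₀

theorem set (h : Split Γ Γ₁ Γ₂) {B : Ty} {c c₁ c₂ : CFlag} (hc : CFlag.Split c c₁ c₂) (p : ℕ) :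
    Split (Γ.set p (B, c)) (Γ₁.set p (B, c₁)) (Γ₂.set p (B, c₂)) := by
  induction h generalizing p
  case nil => exact .nil
  all_goals
    rename_i h ih
    cases p with
    | zero => exact .cons hc h
    | succ p => exact .cons (by constructor) (ih p)

theorem bar_left : ∀ Γ : Ctx, Split Γ (bar Γ) Γ
  | [] => .nil
  | (A, c) :: Γ => by
    have ih := bar_left Γ
    cases c
    exacts [.int ih, .affr ih, .uaff ih, .linr ih, .ulin ih]

theorem assoc {Γb₁ Γb₂ : Ctx} (h : Split Γ Γ₁ Γ₂) (h₂ : Split Γ₂ Γb₁ Γb₂) :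
    ∃ Δ, Split Γ Δ Γb₂ ∧ Split Δ Γ₁ Γb₁ := by
  induction h generalizing Γb₁ Γb₂
  case nil => cases h₂; exact ⟨[], .nil, .nil⟩
  all_goals
    rename_i ih
    cases h₂
    all_goals
      obtain ⟨Δ, h, h'⟩ := ih ‹_›
      exact ⟨_, .cons (by constructor) h, .cons (by constructor) h'⟩

end Split

def skel (Γ : Ctx) : List (Ty × Flag) := Γ.map fun e => (e.1, cToF e.2)

theorem Split.skel_eq {Γ Γ₁ Γ₂ : Ctx} (h : Split Γ Γ₁ Γ₂) :
    skel Γ₁ = skel Γ ∧ skel Γ₂ = skel Γ := by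
  induction h <;> simp_all [skel, cToF]

theorem skel_bar (Γ : Ctx) : skel (bar Γ) = skel Γ := by
  induction Γ with
  | nil => rfl
  | cons e Γ ih => obtain ⟨A, c⟩ := e; cases c <;> exact congrArg (List.cons _) ih

theorem bar_eq_of_skel_eq : ∀ {Γ Γ' : Ctx}, skel Γ = skel Γ' → bar Γ = bar Γ'
  | [], [], _ => rfl
  | (A, c) :: Γ, (A', c') :: Γ', h => by
    simp only [skel, List.map_cons, List.cons.injEq, Prod.mk.injEq] at h
    obtain ⟨⟨rfl, hc⟩, h⟩ := h
    have ih := bar_eq_of_skel_eq h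
    cases c <;> cases c' <;> simp_all [bar, cToF]

theorem skel_set {Γ : Ctx} {p : ℕ} {B : Ty} {c : CFlag} (h : (skel Γ)[p]? = some (B, cToF c)) :
    skel (Γ.set p (B, c)) = skel Γ := by
  simpa [skel, List.map_set] using List.set_eq_self_of_getElem? h

theorem noLin_bar (Γ : Ctx) : NoLin (bar Γ) := by
  intro e he
  obtain ⟨⟨A, c⟩, -, rfl⟩ := List.mem_map.1 he
  cases c <;> simp

theorem NoLin.set {Γ : Ctx} (h : NoLin Γ) {B : Ty} {c : CFlag} (hc : c ≠ .l) (p : ℕ) :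
    NoLin (Γ.set p (B, c)) := by
  intro e he
  rcases List.mem_or_eq_of_mem_set he with he | rfl
  exacts [h e he, hc]

theorem varTyR_iff {Γ : Ctx} {n : ℕ} {f : Flag} {A : Ty} :
    VarTyR Γ n f A ↔ 1 ≤ n ∧ (skel Γ)[n - 1]? = some (A, f) := by
  constructor
  · intro h
    induction h with
    | here hl => simp [skel, hl]
    | there _ ih =>
      obtain ⟨hn, h⟩ := ih
      obtain ⟨n, rfl⟩ := Nat.exists_eq_add_of_le' hn
      simpa [skel] using h
  · induction Γ generalizing n with
    | nil => simp [skel]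
    | cons e Γ ih =>
      rintro ⟨hn, h⟩
      obtain ⟨n, rfl⟩ := Nat.exists_eq_add_of_le' hn
      cases n with
      | zero => simp [skel] at h; obtain ⟨rfl, hf⟩ := h; exact .here hf
      | succ n => exact .there (ih ⟨by omega, by simpa [skel] using h⟩)

theorem VarTyR.of_skel_eq {Γ Γ' : Ctx} {n : ℕ} {f : Flag} {A : Ty} (h : VarTyR Γ n f A)
    (hs : skel Γ' = skel Γ) : VarTyR Γ' n f A :=
  varTyR_iff.2 (hs ▸ varTyR_iff.1 h)

theorem VarTyR.varTy_bar_set {Γ : Ctx} {n : ℕ} {f : Flag} {A : Ty} (h : VarTyR Γ n f A) :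
    VarTy ((bar Γ).set (n - 1) (A, flagC f)) n f A := by
  induction h with
  | here => exact .here (noLin_bar _)
  | @there Γ B c n f A h ih =>
    obtain ⟨n, rfl⟩ := Nat.exists_eq_add_of_le' (varTyR_iff.1 h).1
    exact .there ih (by cases c <;> simp)

namespace VarTy

variable {Γ : Ctx} {n : ℕ} {f : Flag} {A : Ty}

theorem toVarTyR (h : VarTy Γ n f A) : VarTyR Γ n f A := by
  induction h with
  | @here Γ A f _ => exact .here (by cases f <;> rfl)
  | there _ _ ih => exact .there ih

theorem getElem? (h : VarTy Γ n f A) : Γ[n - 1]? = some (A, flagC f) := by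
  induction h with
  | here => simp
  | there h _ ih =>
    obtain ⟨n, rfl⟩ := Nat.exists_eq_add_of_le' (varTyR_iff.1 h.toVarTyR).1
    simpa using ih

theorem set (h : VarTy Γ n f A) {p : ℕ} {B : Ty} {c : CFlag} (hp : p + 1 ≠ n) (hc : c ≠ .l) :
    VarTy (Γ.set p (B, c)) n f A := by
  induction h generalizing p with
  | here hnl =>
    cases p with
    | zero => exact absurd rfl hp
    | succ p => exact .here (hnl.set hc p)
  | there _ hl ih =>
    cases p with
    | zero => exact .there ‹_› hc
    | succ p => exact .there (ih (by omega)) hl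

theorem flag_ne_L (hnl : NoLin Γ) (h : VarTy Γ n f A) : f ≠ .L := by
  rintro rfl
  exact hnl _ (List.mem_of_getElem? h.getElem?) rfl

end VarTy

namespace SubTy

variable {Γ Γ' : Ctx} {es : SubE} {n : ℕ}

theorem split (h : SubTy Γ es n Γ') {Γ'₁ Γ'₂ : Ctx} (hs : Split Γ' Γ'₁ Γ'₂) :
    ∃ Γ₁ Γ₂, Split Γ Γ₁ Γ₂ ∧ SubTy Γ₁ es n Γ'₁ ∧ SubTy Γ₂ es n Γ'₂ := by
  induction h generalizing Γ'₁ Γ'₂ with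
  | nil => cases hs; exact ⟨[], [], .nil, .nil, .nil⟩
  | @shift Γ B c m Γ' h hc ih =>
    obtain ⟨Γ₁, Γ₂, hsp, h₁, h₂⟩ := ih hs
    cases c
    case l => exact absurd rfl hc
    all_goals exact ⟨_, _, .cons (by constructor) hsp, .shift h₁ (by simp), .shift h₂ (by simp)⟩
  | consI hv h ih =>
    cases hs with
    | int hs =>
      obtain ⟨Γ₁, Γ₂, hsp, h₁, h₂⟩ := ih hs
      exact ⟨Γ₁, Γ₂, hsp, .consI (bar_eq_of_skel_eq hsp.skel_eq.1 ▸ hv) h₁,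
        .consI (bar_eq_of_skel_eq hsp.skel_eq.2 ▸ hv) h₂⟩
  | consUL hv h ih =>
    cases hs with
    | ulin hs =>
      obtain ⟨Γ₁, Γ₂, hsp, h₁, h₂⟩ := ih hs
      exact ⟨Γ₁, Γ₂, hsp, .consUL (hv.of_skel_eq hsp.skel_eq.1) h₁,
        .consUL (hv.of_skel_eq hsp.skel_eq.2) h₂⟩
  | consUA hv hf h ih =>
    cases hs with
    | uaff hs =>
      obtain ⟨Γ₁, Γ₂, hsp, h₁, h₂⟩ := ih hs
      exact ⟨Γ₁, Γ₂, hsp, .consUA (hv.of_skel_eq hsp.skel_eq.1) hf h₁,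
        .consUA (hv.of_skel_eq hsp.skel_eq.2) hf h₂⟩
  | consL hsp hv h ih =>
    cases hs with
    | linl hs =>
      obtain ⟨Γb₁, Γb₂, hspb, h₁, h₂⟩ := ih hs
      obtain ⟨Δ, hd, hd'⟩ := hsp.assoc hspb
      exact ⟨Δ, Γb₂, hd, .consL hd' hv h₁,
        .consUL (hv.toVarTyR.of_skel_eq (hd.skel_eq.2.trans hsp.skel_eq.1.symm)) h₂⟩
    | linr hs =>
      obtain ⟨Γb₁, Γb₂, hspb, h₁, h₂⟩ := ih hs
      obtain ⟨Δ, hd, hd'⟩ := hsp.assoc hspb.symm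
      exact ⟨Γb₁, Δ, hd.symm,
        .consUL (hv.toVarTyR.of_skel_eq (hd.skel_eq.2.trans hsp.skel_eq.1.symm)) h₁,
        .consL hd' hv h₂⟩
  | consA hsp hnl hv h ih =>
    have hf := hv.flag_ne_L hnl
    cases hs with
    | affl hs =>
      obtain ⟨Γb₁, Γb₂, hspb, h₁, h₂⟩ := ih hs
      obtain ⟨Δ, hd, hd'⟩ := hsp.assoc hspb
      exact ⟨Δ, Γb₂, hd, .consA hd' hnl hv h₁,
        .consUA (hv.toVarTyR.of_skel_eq (hd.skel_eq.2.trans hsp.skel_eq.1.symm)) hf h₂⟩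
    | affr hs =>
      obtain ⟨Γb₁, Γb₂, hspb, h₁, h₂⟩ := ih hs
      obtain ⟨Δ, hd, hd'⟩ := hsp.assoc hspb.symm
      exact ⟨Γb₁, Δ, hd.symm,
        .consUA (hv.toVarTyR.of_skel_eq (hd.skel_eq.2.trans hsp.skel_eq.1.symm)) hf h₁,
        .consA hd' hnl hv h₂⟩

theorem skel_getElem? (h : SubTy Γ es n Γ') {i j : ℕ} {f' f : Flag} {B : Ty} {c : CFlag}
    (hi : es[i]? = some (j, f', f)) (hΓ' : Γ'[i]? = some (B, c)) :
    (skel Γ)[j - 1]? = some (B, f') := by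
  induction h generalizing i with
  | nil | shift => simp at hi
  | consI hv _ ih =>
    cases i with
    | zero =>
      simp only [List.getElem?_cons_zero, Option.some_inj, Prod.mk.injEq] at hi hΓ'
      obtain ⟨⟨rfl, rfl, -⟩, rfl, -⟩ := And.intro hi hΓ'
      exact skel_bar _ ▸ (varTyR_iff.1 hv.toVarTyR).2
    | succ i => exact ih (by simpa using hi) (by simpa using hΓ')
  | consL hsp hv _ ih | consA hsp _ hv _ ih =>
    cases i with
    | zero =>
      simp only [List.getElem?_cons_zero, Option.some_inj, Prod.mk.injEq] at hi hΓ'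
      obtain ⟨⟨rfl, rfl, -⟩, rfl, -⟩ := And.intro hi hΓ'
      exact hsp.skel_eq.1 ▸ (varTyR_iff.1 hv.toVarTyR).2
    | succ i => exact hsp.skel_eq.2 ▸ ih (by simpa using hi) (by simpa using hΓ')
  | consUL hv _ ih | consUA hv _ _ ih =>
    cases i with
    | zero =>
      simp only [List.getElem?_cons_zero, Option.some_inj, Prod.mk.injEq] at hi hΓ'
      obtain ⟨⟨rfl, rfl, -⟩, rfl, -⟩ := And.intro hi hΓ'
      exact (varTyR_iff.1 hv).2
    | succ i => exact ih (by simpa using hi) (by simpa using hΓ')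

theorem exists_entry_of_a (h : SubTy Γ es n Γ') {i : ℕ} {B : Ty} (hi : Γ'[i]? = some (B, .a)) :
    ∃ j f', es[i]? = some (j, f', .A) ∧ Γ[j - 1]? = some (B, flagC f') := by
  induction h generalizing i with
  | nil => simp at hi
  | shift _ _ ih => obtain ⟨_, _, hj, -⟩ := ih hi; simp at hj
  | consA hsp _ hv _ ih =>
    cases i with
    | zero =>
      simp only [List.getElem?_cons_zero, Option.some_inj, Prod.mk.injEq] at hi
      obtain ⟨rfl, -⟩ := hi
      exact ⟨_, _, rfl, hsp.getElem?_of_left hv.getElem?⟩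
    | succ i =>
      obtain ⟨j, f', hj, hΓ⟩ := ih (by simpa using hi)
      exact ⟨j, f', by simpa using hj, hsp.symm.getElem?_of_left hΓ⟩
  | consL hsp _ _ ih =>
    cases i with
    | zero => simp at hi
    | succ i =>
      obtain ⟨j, f', hj, hΓ⟩ := ih (by simpa using hi)
      exact ⟨j, f', by simpa using hj, hsp.symm.getElem?_of_left hΓ⟩
  | consI _ _ ih | consUL _ _ ih | consUA _ _ _ ih =>
    cases i with
    | zero => simp at hi
    | succ i =>
      obtain ⟨j, f', hj, hΓ⟩ := ih (by simpa using hi)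
      exact ⟨j, f', by simpa using hj, hΓ⟩

theorem mark_used (h : SubTy Γ es n Γ') {p : ℕ} {B : Ty} (hp : (skel Γ)[p]? = some (B, .A))
    (hes : ∀ e ∈ es, e.1 ≠ p + 1) : SubTy (Γ.set p (B, .ua)) es n Γ' := by
  induction h generalizing p with
  | nil => exact .nil
  | shift h hl ih =>
    cases p with
    | zero => exact .shift h (by simp)
    | succ p => exact .shift (ih (by simpa [skel] using hp) (by simp)) hl
  | consI hv _ ih =>
    exact .consI (bar_eq_of_skel_eq (skel_set (c := .ua) hp) ▸ hv)
      (ih hp fun e he => hes e (List.mem_cons_of_mem _ he))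
  | consL hsp hv _ ih =>
    exact .consL (hsp.set .uaff p) (hv.set (hes _ List.mem_cons_self).symm (by simp))
      (ih (hsp.skel_eq.2 ▸ hp) fun e he => hes e (List.mem_cons_of_mem _ he))
  | consA hsp hnl hv _ ih =>
    exact .consA (hsp.set .uaff p) (hnl.set (by simp) p)
      (hv.set (hes _ List.mem_cons_self).symm (by simp))
      (ih (hsp.skel_eq.2 ▸ hp) fun e he => hes e (List.mem_cons_of_mem _ he))
  | consUL hv _ ih =>
    exact .consUL (hv.of_skel_eq (skel_set (c := .ua) hp))
      (ih hp fun e he => hes e (List.mem_cons_of_mem _ he))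
  | consUA hv hf _ ih =>
    exact .consUA (hv.of_skel_eq (skel_set (c := .ua) hp)) hf
      (ih hp fun e he => hes e (List.mem_cons_of_mem _ he))

/-- On the way to entry `i`, the domain assumption `j` is always routed to the right of each
split: no other entry mentions `j`, and entry `i` then consumes it alone. -/
theorem retype_ua (h : SubTy Γ es n Γ') (hd : es.Pairwise fun a b => a.1 ≠ b.1) {i j : ℕ}
    {B : Ty} (hi : es[i]? = some (j + 1, .A, .A)) (hΓ' : Γ'[i]? = some (B, .ua)) :
    SubTy (Γ.set j (B, .a)) es n (Γ'.set i (B, .a)) := by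
  induction h generalizing i with
  | nil | shift => simp at hi
  | consI hv h ih =>
    cases i with
    | zero => simp at hi
    | succ i =>
      simp only [List.getElem?_cons_succ] at hi hΓ'
      exact .consI (bar_eq_of_skel_eq (skel_set (c := .a) (h.skel_getElem? hi hΓ')) ▸ hv)
        (ih hd.of_cons hi hΓ')
  | consL hsp hv _ ih =>
    cases i with
    | zero => simp at hi
    | succ i =>
      simp only [List.getElem?_cons_succ] at hi hΓ'
      have hm := List.rel_of_pairwise_cons hd (List.mem_of_getElem? hi)
      exact .consL (hsp.set .affr j) (hv.set (Ne.symm hm) (by simp)) (ih hd.of_cons hi hΓ')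
  | consA hsp hnl hv _ ih =>
    cases i with
    | zero => simp at hΓ'
    | succ i =>
      simp only [List.getElem?_cons_succ] at hi hΓ'
      have hm := List.rel_of_pairwise_cons hd (List.mem_of_getElem? hi)
      exact .consA (hsp.set .affr j) (hnl.set (by simp) j) (hv.set (Ne.symm hm) (by simp))
        (ih hd.of_cons hi hΓ')
  | consUL hv h ih =>
    cases i with
    | zero => simp at hi
    | succ i =>
      simp only [List.getElem?_cons_succ] at hi hΓ'
      exact .consUL (hv.of_skel_eq (skel_set (c := .a) (h.skel_getElem? hi hΓ')))
        (ih hd.of_cons hi hΓ')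
  | consUA hv hf h ih =>
    cases i with
    | zero =>
      simp only [List.getElem?_cons_zero, Option.some_inj, Prod.mk.injEq] at hi hΓ'
      obtain ⟨⟨rfl, rfl, -⟩, rfl, -⟩ := And.intro hi hΓ'
      exact .consA ((Split.bar_left _).set .affl j) ((noLin_bar _).set (by simp) j)
        hv.varTy_bar_set (h.mark_used (varTyR_iff.1 hv).2 fun e he =>
          (List.rel_of_pairwise_cons hd he).symm)
    | succ i =>
      simp only [List.getElem?_cons_succ] at hi hΓ'
      exact .consUA (hv.of_skel_eq (skel_set (c := .a) (h.skel_getElem? hi hΓ'))) hf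
        (ih hd.of_cons hi hΓ')

end SubTy

theorem AffWeak.getElem? {Γ'' Γ' : Ctx} (h : AffWeak Γ'' Γ') (k : ℕ) :
    Γ''[k]? = Γ'[k]? ∨ ∃ B, Γ''[k]? = some (B, .a) ∧ Γ'[k]? = some (B, .ua) := by
  obtain ⟨Δ, hsp, hnl⟩ := h
  rcases hsp.getElem? k with ⟨h₀, -, h₂⟩ | ⟨A, c, c₁, c₂, h₀, h₁, h₂, hc⟩
  · exact .inl (h₀.trans h₂.symm)
  · cases hc
    case linl => exact absurd rfl (hnl _ (List.mem_of_getElem? h₁))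
    case affl => exact .inr ⟨A, h₀, h₂⟩
    all_goals exact .inl (h₀.trans h₂.symm)

theorem affWeak_set_a {Γ' : Ctx} {i : ℕ} {B : Ty} (h : Γ'[i]? = some (B, .ua)) :
    AffWeak (Γ'.set i (B, .a)) Γ' :=
  ⟨(bar Γ').set i (B, .a),
    by simpa [List.set_eq_self_of_getElem? h] using (Split.bar_left Γ').set (B := B) .affl i,
    (noLin_bar Γ').set (by simp) i⟩

def StrongCriterion (Γ : Ctx) (es : SubE) (Γ' : Ctx) : Prop :=
  ∀ (i j : ℕ) (f' : Flag) (B : Ty), es[i]? = some (j, f', .A) → Γ'[i]? = some (B, .ua) →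
    Γ[j - 1]? = some (B, .ua)

section

variable {Γ Γ' : Ctx} {es : SubE} {n : ℕ}

theorem StrongTy.of_criterion (h : SubTy Γ es n Γ') (hc : StrongCriterion Γ es Γ') :
    StrongTy Γ es n Γ' := by
  refine ⟨h, fun Γ'' hw h'' => List.ext_getElem? fun k => ?_⟩
  rcases hw.getElem? k with heq | ⟨B, h₁, h₂⟩
  · exact heq
  · obtain ⟨j, f', hj, hΓ⟩ := h''.exists_entry_of_a h₁
    have := hc k j f' B hj h₂
    rw [hΓ] at this
    cases f' <;> simp [flagC] at this

theorem StrongTy.criterion (hpat : PatternSub es) (h : StrongTy Γ es n Γ') :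
    StrongCriterion Γ es Γ' := by
  intro i j f' B hi hΓ'
  obtain ⟨hf', hj⟩ := hpat.2 _ (List.mem_of_getElem? hi)
  obtain ⟨j, rfl⟩ := Nat.exists_eq_add_of_le' hj
  obtain rfl : f' = .A := hf'
  obtain ⟨c, hc, hcA⟩ : ∃ c, Γ[j]? = some (B, c) ∧ cToF c = .A := by
    simpa [skel] using h.1.skel_getElem? hi hΓ'
  cases c <;> simp only [cToF, reduceCtorEq] at hcA
  case ua => simpa using hc
  case a =>
    have hretyped := h.1.retype_ua hpat.1 hi hΓ'
    rw [List.set_eq_self_of_getElem? hc] at hretyped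
    have := congrArg (fun l => l[i]?) (h.2 _ (affWeak_set_a hΓ') hretyped)
    rw [List.getElem?_set_self (List.getElem?_eq_some_iff.1 hΓ').1, hΓ'] at this
    simp at this

theorem StrongCriterion.of_split {Γ₁ Γ₂ Γ'₁ Γ'₂ : Ctx} (hpat : PatternSub es)
    (hc : StrongCriterion Γ es Γ') (hsp : Split Γ Γ₁ Γ₂) (hsp' : Split Γ' Γ'₁ Γ'₂)
    (h₂ : SubTy Γ₂ es n Γ'₂) : StrongCriterion Γ₁ es Γ'₁ := by
  intro i j f' B hi hΓ'₁
  obtain ⟨c, c₂, hΓ', hΓ'₂, hcs⟩ := hsp'.getElem?_left_eq_some hΓ'₁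
  cases hcs with
  | uaff =>
    obtain ⟨c₁, c₂, hΓ₁, -, hcs⟩ := hsp.getElem?_eq_some (hc i j f' B hi hΓ')
    cases hcs
    exact hΓ₁
  | affr =>
    obtain rfl : f' = .A := (hpat.2 _ (List.mem_of_getElem? hi)).1
    obtain ⟨j', f'', hj', hΓ₂⟩ := h₂.exists_entry_of_a hΓ'₂
    obtain ⟨rfl, rfl⟩ : j' = j ∧ f'' = .A := by simp_all
    obtain ⟨c₁, c₂, hΓ₁, hΓ₂', hcs⟩ := hsp.getElem?_eq_some (hsp.symm.getElem?_of_left hΓ₂)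
    rw [hΓ₂] at hΓ₂'
    cases hΓ₂'
    cases hcs
    exact hΓ₁

end

/-- Strong typings of pattern substitutions are preserved by
    context splitting. -/
theorem strong_preserved_by_split (Γ : Ctx) (es : SubE) (n : ℕ) (Γ' Γ'₁ Γ'₂ : Ctx)
    (hpat : PatternSub es) (hstrong : StrongTy Γ es n Γ')
    (hsplit : Split Γ' Γ'₁ Γ'₂) :
    ∃ Γ₁ Γ₂, Split Γ Γ₁ Γ₂ ∧
      StrongTy Γ₁ es n Γ'₁ ∧ StrongTy Γ₂ es n Γ'₂ := by
  have hc := hstrong.criterion hpat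
  obtain ⟨Γ₁, Γ₂, hsp, h₁, h₂⟩ := hstrong.1.split hsplit
  exact ⟨Γ₁, Γ₂, hsp, .of_criterion h₁ (hc.of_split hpat hsp hsplit h₂),
    .of_criterion h₂ (hc.of_split hpat hsp.symm hsplit.symm h₁)⟩

end LinUnif
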